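/- Let B be self-adjoint positive semidefinite, c₀ > 0 with c₀‖B‖ ≤ 1, P = I - c₀B. Then for every k ≥ 1, c₀·Σ_{j=0}^{k-1} ‖P^j B^{1/2}‖ ≤ 2·√(c₀·k). -/

import Mathlib

/-! Via the continuous functional calculus, `‖(1 - c₀B)^j √B‖` is at most the supremum of
`(1 - c₀x)^j √x` over the spectrum of `B`, which lies in `[0, 1/c₀]`. Writing `t = c₀x`,
`(1 - t)^j t ≤ e^{-jt} t ≤ t / (1 + jt) ≤ 1/(j+1)`, so the `j`-th term is at most
`(c₀(j+1))^{-1/2}`; summing, `∑_{j<k} (j+1)^{-1/2} ≤ 2√k` gives the bound. -/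

open Finset Real

lemma one_sub_pow_mul_le_inv_succ {t : ℝ} (ht₀ : 0 ≤ t) (ht₁ : t ≤ 1) (j : ℕ) :
    (1 - t) ^ j * t ≤ 1 / (j + 1) := by
  have hexp : (1 - t) ^ j ≤ exp (-(j * t)) := calc
    (1 - t) ^ j ≤ exp (-t) ^ j := pow_le_pow_left₀ (by linarith) (one_sub_le_exp_neg t) j
    _ = exp (-(j * t)) := by rw [← exp_nat_mul]; ring_nf
  have hexp_mul : exp (-(j * t)) * (1 + j * t) ≤ 1 := by
    rw [exp_neg, inv_mul_le_iff₀ (exp_pos _), mul_one, add_comm]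
    exact add_one_le_exp _
  rw [le_div_iff₀ (by positivity)]
  calc (1 - t) ^ j * t * (j + 1) ≤ (1 - t) ^ j * (1 + j * t) := by
        rw [mul_assoc]
        gcongr
        linarith
    _ ≤ exp (-(j * t)) * (1 + j * t) := by gcongr
    _ ≤ 1 := hexp_mul

lemma one_sub_mul_pow_mul_sqrt_le {c x : ℝ} (hc : 0 < c) (hx : 0 ≤ x) (hcx : c * x ≤ 1) (j : ℕ) :
    (1 - c * x) ^ j * √x ≤ 1 / √(c * (j + 1)) := by
  have hP₀ : 0 ≤ (1 - c * x) ^ j := pow_nonneg (by linarith) j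
  have hP₁ : (1 - c * x) ^ j ≤ 1 := pow_le_one₀ (by linarith) (by nlinarith)
  rw [one_div, ← sqrt_inv, le_sqrt (by positivity) (by positivity), mul_pow, sq_sqrt hx]
  calc ((1 - c * x) ^ j) ^ 2 * x ≤ (1 - c * x) ^ j * x := by
        gcongr; exact pow_le_of_le_one hP₀ hP₁ two_ne_zero
    _ = (1 - c * x) ^ j * (c * x) / c := by field_simp
    _ ≤ 1 / (j + 1) / c := by
        gcongr; exact one_sub_pow_mul_le_inv_succ (by positivity) hcx j
    _ = (c * (j + 1))⁻¹ := by field_simp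

lemma sum_range_inv_sqrt_succ_le (n : ℕ) : ∑ i ∈ range n, 1 / √(i + 1) ≤ 2 * √n := by
  induction n with
  | zero => simp
  | succ m ih =>
    have hm := sq_sqrt (Nat.cast_nonneg m : (0 : ℝ) ≤ m)
    have hm₁ := sq_sqrt (by positivity : (0 : ℝ) ≤ m + 1)
    have hpos : 0 < √((m : ℝ) + 1) := sqrt_pos.mpr (by positivity)
    have hstep : 1 / √((m : ℝ) + 1) ≤ 2 * (√((m : ℝ) + 1) - √m) := by
      rw [div_le_iff₀ hpos]
      nlinarith [sqrt_nonneg (m : ℝ), sq_nonneg (√((m : ℝ) + 1) - √m)]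
    rw [sum_range_succ, Nat.cast_succ]
    linarith

section CStarAlgebra

variable {A : Type*} [CStarAlgebra A] [PartialOrder A] [StarOrderedRing A]

lemma one_sub_smul_pow_mul_sqrt_eq_cfc {b : A} (hb : 0 ≤ b) (c : ℝ) (j : ℕ) :
    (1 - c • b) ^ j * CFC.sqrt b = cfc (fun x : ℝ => (1 - c * x) ^ j * √x) b := by
  rw [cfc_mul (fun x : ℝ => (1 - c * x) ^ j) _ b, cfc_pow _ j b, cfc_sub _ _ b, cfc_const_one ℝ b,
    cfc_const_mul_id c b, CFC.sqrt_eq_real_sqrt b hb, cfcₙ_eq_cfc]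

lemma norm_one_sub_smul_pow_mul_sqrt_le {b : A} (hb : 0 ≤ b) {c : ℝ} (hc : 0 < c)
    (hcb : c * ‖b‖ ≤ 1) (j : ℕ) :
    ‖(1 - c • b) ^ j * CFC.sqrt b‖ ≤ 1 / √(c * (j + 1)) := by
  rw [one_sub_smul_pow_mul_sqrt_eq_cfc hb]
  refine norm_cfc_le (by positivity) fun x hx => ?_
  have hx₀ : 0 ≤ x := spectrum_nonneg_of_nonneg hb hx
  have hxb : x ≤ ‖b‖ := by
    simpa [abs_of_nonneg hx₀] using IsometricContinuousFunctionalCalculus.norm_spectrum_le b hx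
  have hcx : c * x ≤ 1 := by nlinarith
  rw [norm_of_nonneg (mul_nonneg (pow_nonneg (by linarith) j) (sqrt_nonneg x))]
  exact one_sub_mul_pow_mul_sqrt_le hc hx₀ hcx j

end CStarAlgebra

theorem stmt13 {E : Type*} [NormedAddCommGroup E] [InnerProductSpace ℂ E] [CompleteSpace E]
    (B : E →L[ℂ] E) (hBpos : 0 ≤ B)
    (c₀ : ℝ) (hc₀ : 0 < c₀) (hc₀B : c₀ * ‖B‖ ≤ 1)
    (P : E →L[ℂ] E) (hP : P = 1 - c₀ • B)
    (k : ℕ) :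
    c₀ * ∑ j ∈ Finset.range k, ‖P ^ j * CFC.sqrt B‖ ≤ 2 * Real.sqrt (c₀ * k) := by
  subst hP
  calc c₀ * ∑ j ∈ range k, ‖(1 - c₀ • B) ^ j * CFC.sqrt B‖
      ≤ ∑ j ∈ range k, √c₀ * (1 / √(j + 1)) := by
        rw [mul_sum]
        refine sum_le_sum fun j _ => ?_
        calc c₀ * ‖(1 - c₀ • B) ^ j * CFC.sqrt B‖ ≤ c₀ * (1 / √(c₀ * (j + 1))) := by
              gcongr; exact norm_one_sub_smul_pow_mul_sqrt_le hBpos hc₀ hc₀B j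
          _ = √c₀ * (1 / √(j + 1)) := by
              rw [sqrt_mul hc₀.le, mul_one_div, mul_one_div, ← div_div, div_sqrt]
    _ = √c₀ * ∑ j ∈ range k, 1 / √(j + 1) := by rw [mul_sum]
    _ ≤ √c₀ * (2 * √k) := by gcongr; exact sum_range_inv_sqrt_succ_le k
    _ = 2 * √(c₀ * k) := by rw [sqrt_mul hc₀.le]; ring
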